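/- Under the same assumptions as the gap-dependent bound (A = U Σ V^T T a GSVD, Ω̂_1 = V_k^T T Ω full row rank, Y = (A T^{-1} A^T S)^q A Ω, Q an S-orthonormal basis of range(Y)), the gap-independent bound holds: ‖A − Q Q^T S A‖_{(S,T)} ≤ (1 + ‖Ω̂_2 Ω̂_1^†‖_2^2)^{1/(4q+2)} · σ_{k+1}. -/

import Mathlib

open Matrix MeasureTheory ProbabilityTheory

noncomputable def spec {m n : ℕ} (A : Matrix (Fin m) (Fin n) ℝ) : ℝ :=
  ‖LinearMap.toContinuousLinearMap (Matrix.toEuclideanLin A)‖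

noncomputable def eigDesc {n : ℕ} {M : Matrix (Fin n) (Fin n) ℝ} (hM : M.IsHermitian)
    (j : Fin n) : ℝ :=
  hM.eigenvalues (Tuple.sort hM.eigenvalues j.rev)

noncomputable def svDesc {m n : ℕ} (A : Matrix (Fin m) (Fin n) ℝ) (j : Fin n) : ℝ :=
  Real.sqrt (eigDesc (by simpa using Matrix.isHermitian_conjTranspose_mul_self A) j)

noncomputable def sqrtM {n : ℕ} {M : Matrix (Fin n) (Fin n) ℝ} (hM : M.PosDef) :
    Matrix (Fin n) (Fin n) ℝ :=
  (hM.posSemidef.1.eigenvectorUnitary : Matrix (Fin n) (Fin n) ℝ) *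
    diagonal (Real.sqrt ∘ hM.posSemidef.1.eigenvalues) *
    (star hM.posSemidef.1.eigenvectorUnitary : Matrix (Fin n) (Fin n) ℝ)

def IsMoorePenrose {m n : ℕ} (A : Matrix (Fin m) (Fin n) ℝ)
    (B : Matrix (Fin n) (Fin m) ℝ) : Prop :=
  A * B * A = A ∧ B * A * B = B ∧ (A * B)ᵀ = A * B ∧ (B * A)ᵀ = B * A

namespace RSVD
open scoped Matrix.Norms.L2Operator

noncomputable def eu {n : ℕ} (x : Fin n → ℝ) : EuclideanSpace ℝ (Fin n) :=
  (WithLp.equiv 2 _).symm x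

lemma spec_eq_norm {m n : ℕ} (A : Matrix (Fin m) (Fin n) ℝ) : spec A = ‖A‖ := rfl

lemma eu_inner {n : ℕ} (x y : Fin n → ℝ) : (inner ℝ (eu x) (eu y) : ℝ) = x ⬝ᵥ y := by
  simp [eu, PiLp.inner_apply, RCLike.inner_apply, dotProduct, mul_comm]

lemma norm_eu_sq {n : ℕ} (x : Fin n → ℝ) : ‖eu x‖ ^ 2 = x ⬝ᵥ x := by
  rw [← eu_inner, real_inner_self_eq_norm_sq]

lemma dot_le_norm {n : ℕ} (x y : Fin n → ℝ) : x ⬝ᵥ y ≤ ‖eu x‖ * ‖eu y‖ := by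
  rw [← eu_inner]; exact real_inner_le_norm _ _

lemma norm_mulVec_le {m n : ℕ} (A : Matrix (Fin m) (Fin n) ℝ) (x : Fin n → ℝ) :
    ‖eu (A *ᵥ x)‖ ≤ ‖A‖ * ‖eu x‖ :=
  Matrix.l2_opNorm_mulVec A (eu x)

lemma norm_le_bound {m n : ℕ} (A : Matrix (Fin m) (Fin n) ℝ) (c : ℝ) (hc : 0 ≤ c)
    (h : ∀ x : Fin n → ℝ, ‖eu (A *ᵥ x)‖ ≤ c * ‖eu x‖) : ‖A‖ ≤ c := by
  rw [Matrix.l2_opNorm_def]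
  exact ContinuousLinearMap.opNorm_le_bound _ hc fun x => h x

lemma norm_transpose {m n : ℕ} (A : Matrix (Fin m) (Fin n) ℝ) : ‖Aᵀ‖ = ‖A‖ := by
  rw [← Matrix.conjTranspose_eq_transpose_of_trivial]
  exact Matrix.l2_opNorm_conjTranspose A

lemma norm_transpose_mul_self {m n : ℕ} (A : Matrix (Fin m) (Fin n) ℝ) :
    ‖Aᵀ * A‖ = ‖A‖ * ‖A‖ := by
  rw [← Matrix.conjTranspose_eq_transpose_of_trivial]
  exact Matrix.l2_opNorm_conjTranspose_mul_self A

lemma norm_self_mul_transpose {m n : ℕ} (A : Matrix (Fin m) (Fin n) ℝ) :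
    ‖A * Aᵀ‖ = ‖A‖ * ‖A‖ := by
  have := norm_transpose_mul_self Aᵀ
  rwa [Matrix.transpose_transpose, norm_transpose] at this

lemma norm_unit_left {n l : ℕ} {U : Matrix (Fin n) (Fin n) ℝ} (hU : Uᵀ * U = 1)
    (A : Matrix (Fin n) (Fin l) ℝ) : ‖U * A‖ = ‖A‖ := by
  have h1 : (U * A)ᵀ * (U * A) = Aᵀ * A := by
    rw [Matrix.transpose_mul]
    calc Aᵀ * Uᵀ * (U * A) = Aᵀ * (Uᵀ * U) * A := by
          rw [Matrix.mul_assoc, Matrix.mul_assoc, Matrix.mul_assoc]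
      _ = Aᵀ * A := by rw [hU, Matrix.mul_one]
  have h2 := norm_transpose_mul_self (U * A)
  rw [h1, norm_transpose_mul_self A] at h2
  exact (mul_self_inj (norm_nonneg _) (norm_nonneg _)).mp h2.symm

lemma norm_unit_right {n l : ℕ} {V : Matrix (Fin n) (Fin n) ℝ} (hV : V * Vᵀ = 1)
    (A : Matrix (Fin l) (Fin n) ℝ) : ‖A * V‖ = ‖A‖ := by
  have h1 : (A * V) * (A * V)ᵀ = A * Aᵀ := by
    rw [Matrix.transpose_mul]
    calc A * V * (Vᵀ * Aᵀ) = A * (V * Vᵀ) * Aᵀ := by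
          rw [Matrix.mul_assoc, Matrix.mul_assoc, Matrix.mul_assoc]
      _ = A * Aᵀ := by rw [hV, Matrix.mul_one]
  have h2 := norm_self_mul_transpose (A * V)
  rw [h1, norm_self_mul_transpose A] at h2
  exact (mul_self_inj (norm_nonneg _) (norm_nonneg _)).mp h2.symm

lemma dot_mulVec_symm {n : ℕ} {H : Matrix (Fin n) (Fin n) ℝ} (hH : Hᵀ = H)
    (u x : Fin n → ℝ) : u ⬝ᵥ (H *ᵥ x) = (H *ᵥ u) ⬝ᵥ x := by
  rw [Matrix.dotProduct_mulVec]
  congr 1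
  rw [← Matrix.mulVec_transpose, hH]

lemma mat_ext_mulVec {m n : ℕ} {A B : Matrix (Fin m) (Fin n) ℝ}
    (h : ∀ x, A *ᵥ x = B *ᵥ x) : A = B := by
  ext i j
  simpa [Matrix.mulVec_single] using congrFun (h (Pi.single j 1)) i

lemma submatrix_id_mul {l m n o : ℕ} (M : Matrix (Fin m) (Fin n) ℝ)
    (N : Matrix (Fin n) (Fin o) ℝ) (f : Fin l → Fin m) :
    (M.submatrix f id) * N = (M * N).submatrix f id := by
  ext i j
  simp [Matrix.mul_apply]

lemma isUnit_det_of_rank_eq {k : ℕ} (G : Matrix (Fin k) (Fin k) ℝ) (h : G.rank = k) :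
    IsUnit G.det := by
  have htop : LinearMap.range G.mulVecLin = ⊤ := by
    apply Submodule.eq_top_of_finrank_eq
    rw [← Matrix.rank, h]
    simp
  have hsurj : Function.Surjective G.mulVec := fun y => LinearMap.range_eq_top.mp htop y
  exact (Matrix.isUnit_iff_isUnit_det G).mp (Matrix.mulVec_surjective_iff_isUnit.mp hsurj)


lemma pow_mulVec_eigen {n : ℕ} {M : Matrix (Fin n) (Fin n) ℝ} (hM : M.IsHermitian)
    (s : ℕ) (i : Fin n) :
    (M ^ s) *ᵥ ⇑(hM.eigenvectorBasis i) = (hM.eigenvalues i ^ s) • ⇑(hM.eigenvectorBasis i) := by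
  induction s with
  | zero => simp
  | succ t ih =>
      rw [pow_succ', ← Matrix.mulVec_mulVec, ih, Matrix.mulVec_smul,
        hM.mulVec_eigenvectorBasis, smul_smul, pow_succ', mul_comm]

lemma transpose_eq_of_herm {n : ℕ} {M : Matrix (Fin n) (Fin n) ℝ} (hM : M.IsHermitian) :
    Mᵀ = M := by
  rw [← Matrix.conjTranspose_eq_transpose_of_trivial]; exact hM

lemma quad_pow_expand {n : ℕ} {M : Matrix (Fin n) (Fin n) ℝ} (hM : M.IsHermitian)
    (y : Fin n → ℝ) (s : ℕ) :
    y ⬝ᵥ ((M ^ s) *ᵥ y) =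
      ∑ i, (hM.eigenvalues i) ^ s * ((⇑(hM.eigenvectorBasis i)) ⬝ᵥ y) ^ 2 := by
  have hsymm : (M ^ s)ᵀ = M ^ s := by
    rw [Matrix.transpose_pow, transpose_eq_of_herm hM]
  have expand := (hM.eigenvectorBasis).sum_inner_mul_inner (eu y) (eu ((M ^ s) *ᵥ y))
  rw [eu_inner] at expand
  rw [← expand]
  apply Finset.sum_congr rfl
  intro i _
  have h1 : (inner ℝ (eu y) (hM.eigenvectorBasis i) : ℝ) = (⇑(hM.eigenvectorBasis i)) ⬝ᵥ y := by
    have h := eu_inner y ⇑(hM.eigenvectorBasis i)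
    rw [dotProduct_comm] at h
    exact h
  have h2 : (inner ℝ (hM.eigenvectorBasis i) (eu ((M ^ s) *ᵥ y)) : ℝ)
      = (hM.eigenvalues i) ^ s * ((⇑(hM.eigenvectorBasis i)) ⬝ᵥ y) := by
    have h := eu_inner (⇑(hM.eigenvectorBasis i)) ((M ^ s) *ᵥ y)
    rw [dot_mulVec_symm hsymm, pow_mulVec_eigen hM s i, smul_dotProduct,
      smul_eq_mul] at h
    exact h
  rw [h1, h2]
  ring

lemma psd_norm_attained {n : ℕ} (hn : 0 < n) {H : Matrix (Fin n) (Fin n) ℝ}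
    (hH : H.PosSemidef) : ∃ x : Fin n → ℝ, ‖eu x‖ = 1 ∧ x ⬝ᵥ (H *ᵥ x) = ‖H‖ := by
  obtain ⟨i₀, -, hmax⟩ := Finset.exists_max_image (Finset.univ : Finset (Fin n))
    hH.1.eigenvalues ⟨⟨0, hn⟩, Finset.mem_univ _⟩
  have hnn : ∀ i, 0 ≤ hH.1.eigenvalues i := hH.eigenvalues_nonneg
  have hHt : Hᵀ = H := transpose_eq_of_herm hH.1
  have parseval : ∀ z : Fin n → ℝ,
      ‖eu z‖ ^ 2 = ∑ i, ((⇑(hH.1.eigenvectorBasis i)) ⬝ᵥ z) ^ 2 := by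
    intro z
    have h0 := quad_pow_expand hH.1 z 0
    simp only [pow_zero, Matrix.one_mulVec, one_mul] at h0
    rw [norm_eu_sq, h0]
  have hub : ‖H‖ ≤ hH.1.eigenvalues i₀ := by
    apply norm_le_bound _ _ (hnn i₀)
    intro x
    have e1 : (H *ᵥ x) ⬝ᵥ (H *ᵥ x) = x ⬝ᵥ ((H ^ 2) *ᵥ x) := by
      rw [pow_two, ← Matrix.mulVec_mulVec, dot_mulVec_symm hHt, dotProduct_comm]
    have hsq : ‖eu (H *ᵥ x)‖ ^ 2 ≤ (hH.1.eigenvalues i₀ * ‖eu x‖) ^ 2 := by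
      rw [norm_eu_sq, e1, quad_pow_expand hH.1 x 2, mul_pow, parseval x, Finset.mul_sum]
      apply Finset.sum_le_sum
      intro i _
      have := pow_le_pow_left₀ (hnn i) (hmax i (Finset.mem_univ i)) 2
      exact mul_le_mul_of_nonneg_right this (sq_nonneg _)
    have h2 := Real.sqrt_le_sqrt hsq
    rwa [Real.sqrt_sq (norm_nonneg _),
      Real.sqrt_sq (mul_nonneg (hnn i₀) (norm_nonneg _))] at h2
  have hb1 : ‖eu ⇑(hH.1.eigenvectorBasis i₀)‖ = 1 := (hH.1.eigenvectorBasis.orthonormal).1 i₀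
  have e2 : H *ᵥ ⇑(hH.1.eigenvectorBasis i₀)
      = hH.1.eigenvalues i₀ • ⇑(hH.1.eigenvectorBasis i₀) := hH.1.mulVec_eigenvectorBasis i₀
  have hlb : hH.1.eigenvalues i₀ ≤ ‖H‖ := by
    have h3 := norm_mulVec_le H ⇑(hH.1.eigenvectorBasis i₀)
    rw [e2, hb1, mul_one] at h3
    have h4 : ‖eu (hH.1.eigenvalues i₀ • ⇑(hH.1.eigenvectorBasis i₀))‖
        = |hH.1.eigenvalues i₀| * ‖eu ⇑(hH.1.eigenvectorBasis i₀)‖ := by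
      rw [show eu (hH.1.eigenvalues i₀ • ⇑(hH.1.eigenvectorBasis i₀))
          = hH.1.eigenvalues i₀ • eu ⇑(hH.1.eigenvectorBasis i₀) from rfl, norm_smul]
      rfl
    rw [h4, hb1, mul_one, abs_of_nonneg (hnn i₀)] at h3
    exact h3
  refine ⟨⇑(hH.1.eigenvectorBasis i₀), hb1, ?_⟩
  rw [e2, dotProduct_smul, smul_eq_mul]
  have h5 : (⇑(hH.1.eigenvectorBasis i₀)) ⬝ᵥ (⇑(hH.1.eigenvectorBasis i₀)) = 1 := by
    have := norm_eu_sq (⇑(hH.1.eigenvectorBasis i₀))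
    rw [hb1] at this
    simpa using this.symm
  rw [h5, mul_one, le_antisymm hub hlb]

lemma jensen_pow {n : ℕ} (μ c : Fin n → ℝ) (hμ : ∀ i, 0 ≤ μ i) (hc : ∀ i, 0 ≤ c i)
    (hsum : ∑ i, c i ≤ 1) (s : ℕ) (hs : 1 ≤ s) :
    (∑ i, μ i * c i) ^ s ≤ ∑ i, μ i ^ s * c i := by
  set t := ∑ i, c i with ht
  have ht0 : 0 ≤ t := Finset.sum_nonneg fun i _ => hc i
  have hS2 : 0 ≤ ∑ i, μ i ^ s * c i :=
    Finset.sum_nonneg fun i _ => mul_nonneg (pow_nonneg (hμ i) s) (hc i)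
  rcases eq_or_lt_of_le ht0 with h0 | hpos
  · have hz : ∀ i ∈ Finset.univ, c i = 0 :=
      (Finset.sum_eq_zero_iff_of_nonneg (fun i _ => hc i)).mp h0.symm
    have : (∑ i, μ i * c i) = 0 :=
      Finset.sum_eq_zero fun i hi => by rw [hz i hi, mul_zero]
    rw [this, zero_pow (by omega : s ≠ 0)]
    exact hS2
  · have htne : t ≠ 0 := ne_of_gt hpos
    have key := (convexOn_pow s).map_sum_le (t := Finset.univ) (w := fun i => c i / t)
      (p := μ) (f := fun x : ℝ => x ^ s)
      (fun i _ => div_nonneg (hc i) ht0)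
      (by rw [← Finset.sum_div, ← ht, div_self htne])
      (fun i _ => Set.mem_Ici.mpr (hμ i))
    simp only [smul_eq_mul] at key
    have e1 : (∑ i, c i / t * μ i) = (∑ i, μ i * c i) / t := by
      rw [Finset.sum_div]
      exact Finset.sum_congr rfl fun i _ => by ring
    have e2 : (∑ i, c i / t * (μ i ^ s)) = (∑ i, μ i ^ s * c i) / t := by
      rw [Finset.sum_div]
      exact Finset.sum_congr rfl fun i _ => by ring
    rw [e1, e2, div_pow] at key
    have key2 : (∑ i, μ i * c i) ^ s ≤ t ^ s * ((∑ i, μ i ^ s * c i) / t) := by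
      have hts : 0 < t ^ s := pow_pos hpos s
      calc (∑ i, μ i * c i) ^ s = t ^ s * ((∑ i, μ i * c i) ^ s / t ^ s) := by
            field_simp
        _ ≤ t ^ s * ((∑ i, μ i ^ s * c i) / t) := by
            exact mul_le_mul_of_nonneg_left key (le_of_lt hts)
    have e3 : t ^ s * ((∑ i, μ i ^ s * c i) / t) = t ^ (s - 1) * (∑ i, μ i ^ s * c i) := by
      have : t ^ s = t ^ (s - 1) * t := by
        rw [← pow_succ]
        congr 1
        omega
      rw [this]
      field_simp
    rw [e3] at key2
    calc (∑ i, μ i * c i) ^ s ≤ t ^ (s - 1) * (∑ i, μ i ^ s * c i) := key2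
      _ ≤ 1 * (∑ i, μ i ^ s * c i) :=
          mul_le_mul_of_nonneg_right (pow_le_one₀ ht0 hsum) hS2
      _ = _ := one_mul _


lemma key_pow {n : ℕ} (hn : 0 < n) {P M : Matrix (Fin n) (Fin n) ℝ}
    (hPt : Pᵀ = P) (hPP : P * P = P) (hM : M.PosSemidef) (s : ℕ) (hs : 1 ≤ s) :
    ‖P * M * P‖ ^ s ≤ ‖P * M ^ s * P‖ := by
  have hH : (P * M * P).PosSemidef := by
    have := hM.mul_mul_conjTranspose_same P
    rwa [Matrix.conjTranspose_eq_transpose_of_trivial, hPt] at this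
  obtain ⟨x, hx1, hx2⟩ := psd_norm_attained hn hH
  set y := P *ᵥ x with hy
  have swap : ∀ N : Matrix (Fin n) (Fin n) ℝ,
      x ⬝ᵥ ((P * N * P) *ᵥ x) = y ⬝ᵥ (N *ᵥ y) := by
    intro N
    rw [← Matrix.mulVec_mulVec, ← Matrix.mulVec_mulVec, dot_mulVec_symm hPt]
  have hynorm : ‖eu y‖ ≤ 1 := by
    have h1 : ‖eu y‖ ^ 2 = x ⬝ᵥ (P *ᵥ x) := by
      rw [norm_eu_sq]
      have h := dot_mulVec_symm hPt x (P *ᵥ x)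
      rw [Matrix.mulVec_mulVec, hPP] at h
      exact h.symm
    have h2 : x ⬝ᵥ (P *ᵥ x) ≤ ‖eu y‖ := by
      calc x ⬝ᵥ (P *ᵥ x) ≤ ‖eu x‖ * ‖eu (P *ᵥ x)‖ := dot_le_norm _ _
        _ = ‖eu y‖ := by rw [hx1, one_mul]
    nlinarith [norm_nonneg (eu y)]
  have hA1 : y ⬝ᵥ (M *ᵥ y)
      = ∑ i, hM.1.eigenvalues i * ((⇑(hM.1.eigenvectorBasis i)) ⬝ᵥ y) ^ 2 := by
    have h := quad_pow_expand hM.1 y 1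
    simpa using h
  have hA2 : ∑ i, ((⇑(hM.1.eigenvectorBasis i)) ⬝ᵥ y) ^ 2 ≤ 1 := by
    have h0 := quad_pow_expand hM.1 y 0
    simp only [pow_zero, Matrix.one_mulVec, one_mul] at h0
    rw [← h0, ← norm_eu_sq]
    calc ‖eu y‖ ^ 2 ≤ 1 ^ 2 := pow_le_pow_left₀ (norm_nonneg _) hynorm 2
      _ = 1 := one_pow 2
  have hA5 : y ⬝ᵥ ((M ^ s) *ᵥ y) ≤ ‖P * M ^ s * P‖ := by
    rw [← swap (M ^ s)]
    calc x ⬝ᵥ ((P * M ^ s * P) *ᵥ x) ≤ ‖eu x‖ * ‖eu ((P * M ^ s * P) *ᵥ x)‖ :=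
          dot_le_norm _ _
      _ ≤ ‖eu x‖ * (‖P * M ^ s * P‖ * ‖eu x‖) := by
          apply mul_le_mul_of_nonneg_left (norm_mulVec_le _ _) (norm_nonneg _)
      _ = ‖P * M ^ s * P‖ := by rw [hx1]; ring
  calc ‖P * M * P‖ ^ s = (x ⬝ᵥ ((P * M * P) *ᵥ x)) ^ s := by rw [hx2]
    _ = (y ⬝ᵥ (M *ᵥ y)) ^ s := by rw [swap]
    _ = (∑ i, hM.1.eigenvalues i * ((⇑(hM.1.eigenvectorBasis i)) ⬝ᵥ y) ^ 2) ^ s := by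
        rw [hA1]
    _ ≤ ∑ i, hM.1.eigenvalues i ^ s * ((⇑(hM.1.eigenvectorBasis i)) ⬝ᵥ y) ^ 2 :=
        jensen_pow _ _ hM.eigenvalues_nonneg (fun i => sq_nonneg _) hA2 s hs
    _ = y ⬝ᵥ ((M ^ s) *ᵥ y) := (quad_pow_expand hM.1 y s).symm
    _ ≤ ‖P * M ^ s * P‖ := hA5


lemma proj_mulVec_le {n : ℕ} {P : Matrix (Fin n) (Fin n) ℝ} (hPt : Pᵀ = P)
    (hPP : P * P = P) (z : Fin n → ℝ) : ‖eu (P *ᵥ z)‖ ≤ ‖eu z‖ := by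
  have h1 : ‖eu (P *ᵥ z)‖ ^ 2 = z ⬝ᵥ (P *ᵥ z) := by
    rw [norm_eu_sq]
    have h := dot_mulVec_symm hPt z (P *ᵥ z)
    rw [Matrix.mulVec_mulVec, hPP] at h
    exact h.symm ▸ (by rw [← h])
  have h2 : z ⬝ᵥ (P *ᵥ z) ≤ ‖eu z‖ * ‖eu (P *ᵥ z)‖ := dot_le_norm _ _
  nlinarith [norm_nonneg (eu (P *ᵥ z)), norm_nonneg (eu z)]

lemma unit_mulVec_norm {n : ℕ} {U : Matrix (Fin n) (Fin n) ℝ} (hU : Uᵀ * U = 1)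
    (z : Fin n → ℝ) : ‖eu (U *ᵥ z)‖ = ‖eu z‖ := by
  have h1 : (U *ᵥ z) ⬝ᵥ (U *ᵥ z) = z ⬝ᵥ z := by
    rw [Matrix.dotProduct_mulVec]
    have h2 : (U *ᵥ z) ᵥ* U = z := by
      rw [← Matrix.vecMul_transpose, Matrix.vecMul_vecMul, hU, Matrix.vecMul_one]
    rw [h2]
  have h3 : ‖eu (U *ᵥ z)‖ ^ 2 = ‖eu z‖ ^ 2 := by rw [norm_eu_sq, norm_eu_sq, h1]
  have := congrArg Real.sqrt h3
  rwa [Real.sqrt_sq (norm_nonneg _), Real.sqrt_sq (norm_nonneg _)] at this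

def ifd (a b : ℕ) (g : ℕ → ℝ) : Matrix (Fin a) (Fin b) ℝ :=
  Matrix.of fun i j => if (i : ℕ) = (j : ℕ) then g i else 0

lemma norm_split {k b : ℕ} (x : Fin (k + b) → ℝ) :
    ‖eu x‖ ^ 2 = ‖eu (fun i : Fin k => x (Fin.castAdd b i))‖ ^ 2
      + ‖eu (fun j : Fin b => x (Fin.natAdd k j))‖ ^ 2 := by
  simp only [norm_eu_sq, dotProduct]
  exact Fin.sum_univ_add (f := fun i : Fin (k + b) => x i * x i)

lemma ifd_mulVec_bound {k a b : ℕ} (g : ℕ → ℝ) (c : ℝ) (hc : 0 ≤ c)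
    (hg : ∀ t, k ≤ t → |g t| ≤ c) (v : Fin (k + b) → ℝ)
    (hv : ∀ i : Fin k, v (Fin.castAdd b i) = 0) :
    ‖eu ((ifd (k + a) (k + b) g) *ᵥ v)‖ ≤ c * ‖eu (fun j : Fin b => v (Fin.natAdd k j))‖ := by
  set v' : ℕ → ℝ := fun t => if h : t < k + b then v ⟨t, h⟩ else 0 with hv'
  have claim1 : ∀ i : Fin (k + a), ((ifd (k + a) (k + b) g) *ᵥ v) i = g i * v' i := by
    intro i
    rcases lt_or_ge (i : ℕ) (k + b) with h | h
    · have : v' (i : ℕ) = v ⟨(i : ℕ), h⟩ := dif_pos h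
      rw [this]
      rw [Matrix.mulVec, dotProduct]
      rw [Finset.sum_eq_single (⟨(i : ℕ), h⟩ : Fin (k + b))]
      · simp [ifd]
      · intro j _ hj
        have : (i : ℕ) ≠ (j : ℕ) := fun hc => hj (by exact Fin.ext hc.symm)
        simp [ifd, this]
      · intro hmem
        exact absurd (Finset.mem_univ _) hmem
    · have hz : v' (i : ℕ) = 0 := dif_neg (not_lt.mpr h)
      rw [hz, mul_zero]
      rw [Matrix.mulVec, dotProduct]
      apply Finset.sum_eq_zero
      intro j _
      have : (i : ℕ) ≠ (j : ℕ) := by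
        have := j.isLt
        omega
      simp [ifd, this]
  have claim2 : ∀ t : ℕ, (g t * v' t) ^ 2 ≤ c ^ 2 * v' t ^ 2 := by
    intro t
    rcases lt_or_ge t k with h | h
    · have : v' t = 0 := by
        have hlt : t < k + b := by omega
        rw [hv' ]
        simp only [dif_pos hlt]
        have : (⟨t, hlt⟩ : Fin (k + b)) = Fin.castAdd b ⟨t, h⟩ := by
          apply Fin.ext
          rfl
        rw [this, hv]
      rw [this]
      simp
    · have h1 : (g t) ^ 2 ≤ c ^ 2 := by
        have := hg t h
        nlinarith [abs_nonneg (g t), sq_abs (g t)]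
      calc (g t * v' t) ^ 2 = g t ^ 2 * v' t ^ 2 := by ring
        _ ≤ c ^ 2 * v' t ^ 2 := mul_le_mul_of_nonneg_right h1 (sq_nonneg _)
  have step1 : ‖eu ((ifd (k + a) (k + b) g) *ᵥ v)‖ ^ 2
      ≤ c ^ 2 * ∑ t ∈ Finset.range (k + a), v' t ^ 2 := by
    rw [norm_eu_sq, dotProduct]
    have : ∀ i : Fin (k + a), ((ifd (k + a) (k + b) g) *ᵥ v) i * ((ifd (k + a) (k + b) g) *ᵥ v) i
        = (g i * v' i) ^ 2 := by
      intro i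
      rw [claim1 i]
      ring
    rw [Finset.sum_congr rfl fun i _ => this i]
    rw [Fin.sum_univ_eq_sum_range (fun t => (g t * v' t) ^ 2) (k + a), Finset.mul_sum]
    exact Finset.sum_le_sum fun t _ => claim2 t
  have step2 : ∑ t ∈ Finset.range (k + a), v' t ^ 2 ≤ ∑ t ∈ Finset.range (k + b), v' t ^ 2 := by
    rcases le_total (k + a) (k + b) with h | h
    · apply Finset.sum_le_sum_of_subset_of_nonneg (Finset.range_subset_range.mpr h)
      intro t _ _
      exact sq_nonneg _
    · refine le_of_eq (Finset.sum_subset (Finset.range_subset_range.mpr h) ?_).symm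
      intro t ht htn
      have : ¬ t < k + b := by
        simp only [Finset.mem_range] at htn
        exact htn
      rw [hv']
      simp [dif_neg this]
  have step3 : ∑ t ∈ Finset.range (k + b), v' t ^ 2
      = ‖eu (fun j : Fin b => v (Fin.natAdd k j))‖ ^ 2 := by
    rw [← Fin.sum_univ_eq_sum_range (fun t => v' t ^ 2) (k + b)]
    have : ∀ j : Fin (k + b), v' (j : ℕ) ^ 2 = v j ^ 2 := by
      intro j
      rw [hv']
      simp only [dif_pos j.isLt]
    rw [Finset.sum_congr rfl fun j _ => this j]
    have hns := norm_split v
    have hzero : ‖eu (fun i : Fin k => v (Fin.castAdd b i))‖ ^ 2 = 0 := by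
      rw [norm_eu_sq, dotProduct]
      apply Finset.sum_eq_zero
      intro i _
      rw [hv i, mul_zero]
    rw [hzero, zero_add] at hns
    rw [← hns, norm_eu_sq, dotProduct]
    exact Finset.sum_congr rfl fun j _ => by ring
  have final : ‖eu ((ifd (k + a) (k + b) g) *ᵥ v)‖ ^ 2
      ≤ (c * ‖eu (fun j : Fin b => v (Fin.natAdd k j))‖) ^ 2 := by
    rw [mul_pow]
    calc ‖eu ((ifd (k + a) (k + b) g) *ᵥ v)‖ ^ 2
        ≤ c ^ 2 * ∑ t ∈ Finset.range (k + a), v' t ^ 2 := step1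
      _ ≤ c ^ 2 * ∑ t ∈ Finset.range (k + b), v' t ^ 2 :=
          mul_le_mul_of_nonneg_left step2 (sq_nonneg _)
      _ = _ := by rw [step3]
  have := Real.sqrt_le_sqrt final
  rwa [Real.sqrt_sq (norm_nonneg _), Real.sqrt_sq (mul_nonneg hc (norm_nonneg _))] at this

lemma sigma_mul_transpose {a b : ℕ} (g : ℕ → ℝ) :
    (ifd a b g) * (ifd a b g)ᵀ
      = Matrix.diagonal (fun i : Fin a => if (i : ℕ) < b then g i ^ 2 else 0) := by
  ext i i'
  rw [Matrix.mul_apply]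
  by_cases hii : i = i'
  · subst hii
    rw [Matrix.diagonal_apply_eq]
    by_cases h : (i : ℕ) < b
    · rw [if_pos h, Finset.sum_eq_single (⟨(i : ℕ), h⟩ : Fin b)]
      · simp [ifd]
        ring
      · intro j _ hj
        have : (i : ℕ) ≠ (j : ℕ) := fun hc => hj (Fin.ext hc.symm)
        simp [ifd, this]
      · intro hmem
        exact absurd (Finset.mem_univ _) hmem
    · rw [if_neg h]
      apply Finset.sum_eq_zero
      intro j _
      have : (i : ℕ) ≠ (j : ℕ) := by
        have := j.isLt
        omega
      simp [ifd, this]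
  · rw [Matrix.diagonal_apply_ne _ hii]
    apply Finset.sum_eq_zero
    intro j _
    have hne : (i : ℕ) ≠ (i' : ℕ) := fun hc => hii (Fin.ext hc)
    by_cases h1 : (i : ℕ) = (j : ℕ)
    · have : (i' : ℕ) ≠ (j : ℕ) := by omega
      simp [ifd, Matrix.transpose_apply, this]
    · simp [ifd, h1]

lemma diagonal_mul_ifd {a b : ℕ} (d : Fin a → ℝ) (g : ℕ → ℝ) :
    (Matrix.diagonal d) * (ifd a b g)
      = Matrix.of fun (i : Fin a) (j : Fin b) =>
          if (i : ℕ) = (j : ℕ) then d i * g i else 0 := by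
  ext i j
  rw [Matrix.diagonal_mul]
  simp only [ifd, Matrix.of_apply, mul_ite, mul_zero]


lemma cs_bound (a b f X : ℝ) (ha : 0 ≤ a) (hb : 0 ≤ b) (hf : 0 ≤ f) (hX : 0 ≤ X)
    (hX2 : X ^ 2 = a ^ 2 + b ^ 2) : b + f * a ≤ Real.sqrt (1 + f ^ 2) * X := by
  have h1 : (b + f * a) ^ 2 ≤ (1 + f ^ 2) * X ^ 2 := by
    rw [hX2]
    nlinarith [sq_nonneg (a - f * b)]
  have h2 := Real.sqrt_le_sqrt h1
  rw [Real.sqrt_sq (by positivity)] at h2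
  rwa [Real.sqrt_mul (by positivity) _, Real.sqrt_sq hX] at h2

lemma mulVec_submatrix_apply {a b c : ℕ} (M : Matrix (Fin a) (Fin b) ℝ) (f : Fin c → Fin a)
    (z : Fin b → ℝ) (i : Fin c) : ((M.submatrix f id) *ᵥ z) i = (M *ᵥ z) (f i) := rfl

lemma sqrtM_mul_self {n : ℕ} {M : Matrix (Fin n) (Fin n) ℝ} (hM : M.PosDef) :
    sqrtM hM * sqrtM hM = M := by
  have hspec := hM.posSemidef.1.spectral_theorem
  rw [Unitary.conjStarAlgAut_apply] at hspec
  have hu : (star hM.posSemidef.1.eigenvectorUnitary : Matrix (Fin n) (Fin n) ℝ) *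
      (hM.posSemidef.1.eigenvectorUnitary : Matrix (Fin n) (Fin n) ℝ) = 1 :=
    Unitary.coe_star_mul_self _
  have hd : diagonal (Real.sqrt ∘ hM.posSemidef.1.eigenvalues) *
      diagonal (Real.sqrt ∘ hM.posSemidef.1.eigenvalues) =
      diagonal (RCLike.ofReal ∘ hM.posSemidef.1.eigenvalues) := by
    rw [diagonal_mul_diagonal]
    congr 1
    funext i
    simpa using Real.mul_self_sqrt (hM.posSemidef.eigenvalues_nonneg i)
  conv_rhs => rw [hspec]
  unfold sqrtM
  rw [show ∀ (X Y Z : Matrix (Fin n) (Fin n) ℝ), X * Y * Z * (X * Y * Z) =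
      X * (Y * (Z * X) * Y) * Z from fun X Y Z => by simp only [Matrix.mul_assoc],
    hu, Matrix.mul_one, hd, Matrix.mul_assoc]

lemma sqrtM_transpose {n : ℕ} {M : Matrix (Fin n) (Fin n) ℝ} (hM : M.PosDef) :
    (sqrtM hM)ᵀ = sqrtM hM := by
  unfold sqrtM
  rw [← Matrix.conjTranspose_eq_transpose_of_trivial]
  simp [Matrix.conjTranspose_mul, Matrix.star_eq_conjTranspose, Matrix.mul_assoc]

end RSVD

open scoped Matrix.Norms.L2Operator

/-- gap-independent deterministic bound: under the same assumptions
as the gap-dependent bound,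
$\|A-QQ^TSA\|_{(S,T)} \le (1+\|\widehat\Omega_2\widehat\Omega_1^\dagger\|_2^2)^{1/(4q+2)}\sigma_{k+1}$. -/
theorem stmt8 {k p q m' n' : ℕ} (hk : 1 ≤ k) (hpm : p ≤ m') (hpn : p ≤ n')
    (S : Matrix (Fin (k + m')) (Fin (k + m')) ℝ)
    (T : Matrix (Fin (k + n')) (Fin (k + n')) ℝ)
    (hS : S.PosDef) (hT : T.PosDef)
    (A : Matrix (Fin (k + m')) (Fin (k + n')) ℝ)
    (U : Matrix (Fin (k + m')) (Fin (k + m')) ℝ)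
    (V : Matrix (Fin (k + n')) (Fin (k + n')) ℝ)
    (sig : ℕ → ℝ) (hsig : Antitone sig) (hsig0 : ∀ i, 0 ≤ sig i)
    (hU : Uᵀ * S * U = 1) (hV : Vᵀ * T * V = 1)
    (hA : A = U * (Matrix.of fun (i : Fin (k + m')) (j : Fin (k + n')) =>
                if (i : ℕ) = (j : ℕ) then sig i else 0) * Vᵀ * T)
    (Ω : Matrix (Fin (k + n')) (Fin (k + p)) ℝ)
    (hrank : ((V.submatrix id (Fin.castAdd n'))ᵀ * T * Ω).rank = k)
    (Q : Matrix (Fin (k + m')) (Fin (k + p)) ℝ)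
    (hQ : Qᵀ * S * Q = 1)
    (hrange : LinearMap.range Q.mulVecLin =
      LinearMap.range ((A * T⁻¹ * Aᵀ * S) ^ q * (A * Ω)).mulVecLin) :
    spec (sqrtM hS * (A - Q * Qᵀ * S * A) * (sqrtM hT)⁻¹) ≤
      (1 + (spec (((V.submatrix id (Fin.natAdd k))ᵀ * T * Ω) *
               (((V.submatrix id (Fin.castAdd n'))ᵀ * T * Ω)ᵀ *
                (((V.submatrix id (Fin.castAdd n'))ᵀ * T * Ω) *
                 ((V.submatrix id (Fin.castAdd n'))ᵀ * T * Ω)ᵀ)⁻¹))) ^ 2) ^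
        ((1 : ℝ) / (4 * q + 2)) * sig k := by

  classical
  have hk0 : 0 < k + m' := by omega
  set s : ℕ := 2 * q + 1 with hs_def
  set Srt := sqrtM hS with hSrtdef
  set Trt := sqrtM hT with hTrtdef
  have hSq : Srt * Srt = S := RSVD.sqrtM_mul_self hS
  have hTq : Trt * Trt = T := RSVD.sqrtM_mul_self hT
  have hSt : Srtᵀ = Srt := RSVD.sqrtM_transpose hS
  have hTt : Trtᵀ = Trt := RSVD.sqrtM_transpose hT
  clear_value Srt Trt
  have hTrtdet : IsUnit Trt.det := by
    have h := congrArg Matrix.det hTq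
    rw [Matrix.det_mul] at h
    refine isUnit_iff_ne_zero.mpr fun h0 => ?_
    rw [h0, mul_zero] at h
    exact hT.det_pos.ne' h.symm
  have hTrt_inv : Trt * Trt⁻¹ = 1 := Matrix.mul_nonsing_inv _ hTrtdet
  have hTrt_inv' : Trt⁻¹ * Trt = 1 := Matrix.nonsing_inv_mul _ hTrtdet
  have hTinv : T⁻¹ = Trt⁻¹ * Trt⁻¹ := by rw [← hTq, Matrix.mul_inv_rev]
  have hTTrti : T * Trt⁻¹ = Trt := by rw [← hTq, Matrix.mul_assoc, hTrt_inv, Matrix.mul_one]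
  have hTrti_t : Trt⁻¹ᵀ = Trt⁻¹ := by rw [Matrix.transpose_nonsing_inv, hTt]
  set Uh := Srt * U with hUhdef
  set Vh := Trt * V with hVhdef
  clear_value Uh Vh
  have hUh : Uhᵀ * Uh = 1 := by
    rw [hUhdef, Matrix.transpose_mul, hSt]
    have h : Uᵀ * Srt * (Srt * U) = Uᵀ * S * U := by
      rw [← hSq]; simp only [Matrix.mul_assoc]
    rw [h, hU]
  have hVh : Vhᵀ * Vh = 1 := by
    rw [hVhdef, Matrix.transpose_mul, hTt]
    have h : Vᵀ * Trt * (Trt * V) = Vᵀ * T * V := by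
      rw [← hTq]; simp only [Matrix.mul_assoc]
    rw [h, hV]
  have hUh2 : Uh * Uhᵀ = 1 := mul_eq_one_comm.mp hUh
  have hVh2 : Vh * Vhᵀ = 1 := mul_eq_one_comm.mp hVh
  have canU : ∀ {o : ℕ} (X : Matrix (Fin (k + m')) (Fin o) ℝ), Uhᵀ * (Uh * X) = X := by
    intro o X; rw [← Matrix.mul_assoc, hUh, Matrix.one_mul]
  have canV : ∀ {o : ℕ} (X : Matrix (Fin (k + n')) (Fin o) ℝ), Vhᵀ * (Vh * X) = X := by
    intro o X; rw [← Matrix.mul_assoc, hVh, Matrix.one_mul]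
  set Sig := RSVD.ifd (k + m') (k + n') sig with hSigdef
  have hASig : A = U * Sig * Vᵀ * T := hA
  clear_value Sig
  set B := Srt * A * Trt⁻¹ with hBdef
  clear_value B
  have hB : B = Uh * Sig * Vhᵀ := by
    rw [hBdef, hASig, hUhdef, hVhdef, Matrix.transpose_mul, hTt]
    simp only [Matrix.mul_assoc]
    rw [hTTrti]
  set M := B * Bᵀ with hMdef
  clear_value M
  have hMpsd : M.PosSemidef := by
    rw [hMdef]
    have h := Matrix.posSemidef_self_mul_conjTranspose B
    rwa [Matrix.conjTranspose_eq_transpose_of_trivial] at h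
  have hBt : Bᵀ = Trt⁻¹ * (Aᵀ * Srt) := by
    rw [hBdef, Matrix.transpose_mul, Matrix.transpose_mul, hSt, hTrti_t]
  have hMSrt : M * Srt = Srt * (A * T⁻¹ * Aᵀ * S) := by
    rw [hMdef, hBt, hBdef, hTinv, ← hSq]
    simp only [Matrix.mul_assoc]
  have hMq : ∀ j : ℕ, M ^ j * Srt = Srt * (A * T⁻¹ * Aᵀ * S) ^ j := by
    intro j
    induction j with
    | zero => simp
    | succ t ih =>
        rw [pow_succ, pow_succ, Matrix.mul_assoc, hMSrt, ← Matrix.mul_assoc, ih,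
          Matrix.mul_assoc]
  set Y := (A * T⁻¹ * Aᵀ * S) ^ q * (A * Ω) with hYdef
  set C := M ^ q * B with hCdef
  clear_value Y C
  have hSrtA : Srt * A = B * Trt := by
    rw [hBdef]
    simp only [Matrix.mul_assoc]
    rw [hTrt_inv', Matrix.mul_one]
  have hZ : Srt * Y = C * (Trt * Ω) := by
    rw [hYdef, hCdef]
    calc Srt * ((A * T⁻¹ * Aᵀ * S) ^ q * (A * Ω))
        = Srt * (A * T⁻¹ * Aᵀ * S) ^ q * (A * Ω) := (Matrix.mul_assoc _ _ _).symm
      _ = M ^ q * Srt * (A * Ω) := by rw [hMq q]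
      _ = M ^ q * (Srt * A * Ω) := by simp only [Matrix.mul_assoc]
      _ = M ^ q * (B * Trt * Ω) := by rw [hSrtA]
      _ = M ^ q * B * (Trt * Ω) := by simp only [Matrix.mul_assoc]
  set E := RSVD.ifd (k + m') (k + n') (fun t => sig t ^ s) with hEdef
  clear_value E
  have hMU : M = Uh * (Sig * Sigᵀ) * Uhᵀ := by
    rw [hMdef, hB, Matrix.transpose_mul, Matrix.transpose_mul, Matrix.transpose_transpose]
    simp only [Matrix.mul_assoc]
    rw [canV]
  have hMpow : ∀ j : ℕ, M ^ j = Uh * (Sig * Sigᵀ) ^ j * Uhᵀ := by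
    intro j
    induction j with
    | zero => rw [pow_zero, pow_zero, Matrix.mul_one, hUh2]
    | succ t ih =>
        rw [pow_succ, ih, hMU, pow_succ]
        simp only [Matrix.mul_assoc]
        rw [canU]
  have hSigE : (Sig * Sigᵀ) ^ q * Sig = E := by
    rw [hSigdef, RSVD.sigma_mul_transpose, Matrix.diagonal_pow]
    rw [RSVD.diagonal_mul_ifd]
    ext i j
    by_cases hij : (i : ℕ) = (j : ℕ)
    · have hilt : (i : ℕ) < k + n' := hij ▸ j.isLt
      simp only [Matrix.of_apply, if_pos hij, hEdef, RSVD.ifd, Pi.pow_apply]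
      rw [if_pos hilt, ← pow_mul, ← pow_succ]
    · simp only [Matrix.of_apply, if_neg hij, hEdef, RSVD.ifd]
  have hCU : C = Uh * E * Vhᵀ := by
    rw [hCdef, hMpow q, hB]
    simp only [Matrix.mul_assoc]
    rw [canU,
      show (Sig * Sigᵀ) ^ q * (Sig * Vhᵀ) = E * Vhᵀ from by rw [← Matrix.mul_assoc, hSigE]]
  -- omega hats
  set Om := Vᵀ * T * Ω with hOmdef
  set Om1 := (V.submatrix id (Fin.castAdd n'))ᵀ * T * Ω with hOm1def
  set Om2 := (V.submatrix id (Fin.natAdd k))ᵀ * T * Ω with hOm2def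
  clear_value Om Om1 Om2
  have hOm1sub : Om1 = Om.submatrix (Fin.castAdd n') id := by
    rw [hOm1def, hOmdef, Matrix.transpose_submatrix, RSVD.submatrix_id_mul,
      RSVD.submatrix_id_mul]
  have hOm2sub : Om2 = Om.submatrix (Fin.natAdd k) id := by
    rw [hOm2def, hOmdef, Matrix.transpose_submatrix, RSVD.submatrix_id_mul,
      RSVD.submatrix_id_mul]
  have hrank' : (Om1 * Om1ᵀ).rank = k := by rw [Matrix.rank_self_mul_transpose, hrank]
  have hGdet : IsUnit (Om1 * Om1ᵀ).det := RSVD.isUnit_det_of_rank_eq _ hrank'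
  set W := Om1ᵀ * (Om1 * Om1ᵀ)⁻¹ with hWdef
  clear_value W
  have hOm1W : Om1 * W = 1 := by
    rw [hWdef, ← Matrix.mul_assoc, Matrix.mul_nonsing_inv _ hGdet]
  set F := Om2 * W with hFdef
  clear_value F
  have hVhOm : Vhᵀ * (Trt * Ω) = Om := by
    rw [hVhdef, Matrix.transpose_mul, hTt, hOmdef, ← hTq]
    simp only [Matrix.mul_assoc]
  have hZ2 : Srt * Y = Uh * E * Om := by
    rw [hZ, hCU, ← hVhOm]
    simp only [Matrix.mul_assoc]
  -- projection
  set Pr : Matrix (Fin (k + m')) (Fin (k + m')) ℝ := 1 - Srt * Q * Qᵀ * Srt with hPrdef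
  clear_value Pr
  have hQ' : Qᵀ * (S * Q) = 1 := by rw [← Matrix.mul_assoc]; exact hQ
  have canS : ∀ {o : ℕ} (X : Matrix (Fin (k + m')) (Fin o) ℝ), Srt * (Srt * X) = S * X := by
    intro o X; rw [← Matrix.mul_assoc, hSq]
  have canQ : ∀ {o : ℕ} (X : Matrix (Fin (k + p)) (Fin o) ℝ), Qᵀ * (S * (Q * X)) = X := by
    intro o X
    rw [show Qᵀ * (S * (Q * X)) = (Qᵀ * (S * Q)) * X from by simp only [Matrix.mul_assoc],
      hQ', Matrix.one_mul]
  have hPrt : Prᵀ = Pr := by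
    rw [hPrdef, Matrix.transpose_sub, Matrix.transpose_one]
    congr 1
    rw [Matrix.transpose_mul, Matrix.transpose_mul, Matrix.transpose_mul, hSt,
      Matrix.transpose_transpose]
    simp only [Matrix.mul_assoc]
  have hPP0 : (Srt * Q * Qᵀ * Srt) * (Srt * Q * Qᵀ * Srt) = Srt * Q * Qᵀ * Srt := by
    calc (Srt * Q * Qᵀ * Srt) * (Srt * Q * Qᵀ * Srt)
        = Srt * (Q * (Qᵀ * (Srt * (Srt * (Q * (Qᵀ * Srt)))))) := by
          simp only [Matrix.mul_assoc]
      _ = Srt * (Q * (Qᵀ * (S * (Q * (Qᵀ * Srt))))) := by rw [canS]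
      _ = Srt * (Q * (Qᵀ * Srt)) := by rw [canQ]
      _ = Srt * Q * Qᵀ * Srt := by simp only [Matrix.mul_assoc]
  have hPrPr : Pr * Pr = Pr := by
    rw [hPrdef]
    have e : (1 - Srt * Q * Qᵀ * Srt) * (1 - Srt * Q * Qᵀ * Srt)
        = 1 - Srt * Q * Qᵀ * Srt - Srt * Q * Qᵀ * Srt
          + (Srt * Q * Qᵀ * Srt) * (Srt * Q * Qᵀ * Srt) := by noncomm_ring
    rw [e, hPP0]
    abel
  -- Pr kills Srt * Y
  have hQY : Q * Qᵀ * S * Y = Y := by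
    apply RSVD.mat_ext_mulVec
    intro x
    have hmem : Y *ᵥ x ∈ LinearMap.range Q.mulVecLin := by
      rw [hrange]
      exact ⟨x, Matrix.mulVecLin_apply _ _⟩
    obtain ⟨v, hv⟩ := hmem
    rw [Matrix.mulVecLin_apply] at hv
    calc (Q * Qᵀ * S * Y) *ᵥ x = Q *ᵥ (Qᵀ *ᵥ (S *ᵥ (Y *ᵥ x))) := by
          simp only [← Matrix.mulVec_mulVec]
      _ = Q *ᵥ (Qᵀ *ᵥ (S *ᵥ (Q *ᵥ v))) := by rw [hv]
      _ = (Q * (Qᵀ * (S * Q))) *ᵥ v := by simp only [Matrix.mulVec_mulVec]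
      _ = Q *ᵥ v := by rw [hQ', Matrix.mul_one]
      _ = Y *ᵥ x := hv
  have hPrSY : Pr * (Srt * Y) = 0 := by
    have hQY' : Q * (Qᵀ * (S * Y)) = Y := by
      rw [← Matrix.mul_assoc, ← Matrix.mul_assoc]; exact hQY
    have hPSY : (Srt * Q * Qᵀ * Srt) * (Srt * Y) = Srt * Y := by
      calc (Srt * Q * Qᵀ * Srt) * (Srt * Y)
          = Srt * (Q * (Qᵀ * (Srt * (Srt * Y)))) := by simp only [Matrix.mul_assoc]
        _ = Srt * (Q * (Qᵀ * (S * Y))) := by rw [canS]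
        _ = Srt * Y := by rw [hQY']
    rw [hPrdef, Matrix.sub_mul, Matrix.one_mul, hPSY, sub_self]
  -- LHS equals Pr * B
  have hLHS : Srt * (A - Q * Qᵀ * S * A) * Trt⁻¹ = Pr * B := by
    rw [Matrix.mul_sub, Matrix.sub_mul, hPrdef, Matrix.sub_mul, Matrix.one_mul, ← hBdef]
    congr 1
    rw [hBdef, ← hSq]
    simp only [Matrix.mul_assoc]
  -- structural bound
  have hPrZ0 : Pr * (Uh * E * Om) = 0 := by rw [← hZ2]; exact hPrSY
  have hPrWZero : Pr * (Uh * E) * (Om * W) = 0 := by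
    calc Pr * (Uh * E) * (Om * W) = (Pr * (Uh * E * Om)) * W := by
          simp only [Matrix.mul_assoc]
      _ = 0 := by rw [hPrZ0, Matrix.zero_mul]
  have hOmW1 : (Om * W).submatrix (Fin.castAdd n') id = 1 := by
    rw [← RSVD.submatrix_id_mul Om W (Fin.castAdd n'), ← hOm1sub, hOm1W]
  have hOmW2 : (Om * W).submatrix (Fin.natAdd k) id = F := by
    rw [← RSVD.submatrix_id_mul Om W (Fin.natAdd k), ← hOm2sub, ← hFdef]
  set t : ℝ := sig k ^ s * Real.sqrt (1 + ‖F‖ ^ 2) with htdef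
  clear_value t
  have ht0 : 0 ≤ t := by
    rw [htdef]
    exact mul_nonneg (pow_nonneg (hsig0 k) s) (Real.sqrt_nonneg _)
  have hPrC : ‖Pr * C‖ ≤ t := by
    have hCV : Pr * C * Vh = Pr * (Uh * E) := by
      rw [hCU]
      simp only [Matrix.mul_assoc]
      rw [hVh, Matrix.mul_one]
    rw [← RSVD.norm_unit_right hVh2 (Pr * C), hCV]
    apply RSVD.norm_le_bound _ _ ht0
    intro x
    set x1 : Fin k → ℝ := fun i => x (Fin.castAdd n' i) with hx1def
    set x2 : Fin n' → ℝ := fun j => x (Fin.natAdd k j) with hx2def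
    clear_value x1 x2
    set w : Fin (k + n') → ℝ := (Om * W) *ᵥ x1 with hwdef
    clear_value w
    have hw1 : ∀ i : Fin k, w (Fin.castAdd n' i) = x1 i := by
      intro i
      have h := RSVD.mulVec_submatrix_apply (Om * W) (Fin.castAdd n') x1 i
      rw [hOmW1] at h
      rw [hwdef, ← h, Matrix.one_mulVec]
    have hw2 : ∀ j : Fin n', w (Fin.natAdd k j) = (F *ᵥ x1) j := by
      intro j
      have h := RSVD.mulVec_submatrix_apply (Om * W) (Fin.natAdd k) x1 j
      rw [hOmW2] at h
      rw [hwdef, ← h]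
    set v : Fin (k + n') → ℝ := x - w with hvdef
    clear_value v
    have hv1 : ∀ i : Fin k, v (Fin.castAdd n' i) = 0 := by
      intro i
      rw [hvdef, Pi.sub_apply, hw1 i]
      simp [hx1def]
    have hveq : (fun j : Fin n' => v (Fin.natAdd k j)) = x2 - F *ᵥ x1 := by
      funext j
      rw [hvdef, Pi.sub_apply, hw2 j, Pi.sub_apply]
      simp [hx2def]
    have hEv : (Pr * (Uh * E)) *ᵥ x = (Pr * Uh) *ᵥ (E *ᵥ v) := by
      have hzero : (Pr * (Uh * E) * (Om * W)) *ᵥ x1 = 0 := by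
        rw [hPrWZero, Matrix.zero_mulVec]
      have hterm : (Pr * (Uh * E) * (Om * W)) *ᵥ x1 = (Pr * (Uh * E)) *ᵥ w := by
        rw [hwdef, Matrix.mulVec_mulVec]
      calc (Pr * (Uh * E)) *ᵥ x
          = (Pr * (Uh * E)) *ᵥ x - (Pr * (Uh * E) * (Om * W)) *ᵥ x1 := by
            rw [hzero, sub_zero]
        _ = (Pr * (Uh * E)) *ᵥ x - (Pr * (Uh * E)) *ᵥ w := by rw [hterm]
        _ = (Pr * (Uh * E)) *ᵥ v := by rw [← Matrix.mulVec_sub, ← hvdef]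
        _ = (Pr * Uh) *ᵥ (E *ᵥ v) := by rw [← Matrix.mul_assoc, ← Matrix.mulVec_mulVec]
    rw [hEv]
    have hstep1 : ‖RSVD.eu ((Pr * Uh) *ᵥ (E *ᵥ v))‖ ≤ ‖RSVD.eu (E *ᵥ v)‖ := by
      rw [← Matrix.mulVec_mulVec]
      calc ‖RSVD.eu (Pr *ᵥ (Uh *ᵥ (E *ᵥ v)))‖ ≤ ‖RSVD.eu (Uh *ᵥ (E *ᵥ v))‖ :=
            RSVD.proj_mulVec_le hPrt hPrPr _
        _ = ‖RSVD.eu (E *ᵥ v)‖ := RSVD.unit_mulVec_norm hUh _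
    have hstep2 : ‖RSVD.eu (E *ᵥ v)‖
        ≤ sig k ^ s * ‖RSVD.eu (fun j : Fin n' => v (Fin.natAdd k j))‖ := by
      rw [hEdef]
      exact RSVD.ifd_mulVec_bound _ _ (pow_nonneg (hsig0 k) s)
        (fun u hu => by
          rw [abs_of_nonneg (pow_nonneg (hsig0 u) s)]
          exact pow_le_pow_left₀ (hsig0 u) (hsig hu) s) v hv1
    have hstep3 : ‖RSVD.eu (x2 - F *ᵥ x1)‖ ≤ ‖RSVD.eu x2‖ + ‖F‖ * ‖RSVD.eu x1‖ := by
      have heq : RSVD.eu (x2 - F *ᵥ x1) = RSVD.eu x2 - RSVD.eu (F *ᵥ x1) := rfl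
      rw [heq]
      calc ‖RSVD.eu x2 - RSVD.eu (F *ᵥ x1)‖ ≤ ‖RSVD.eu x2‖ + ‖RSVD.eu (F *ᵥ x1)‖ :=
            norm_sub_le _ _
        _ ≤ ‖RSVD.eu x2‖ + ‖F‖ * ‖RSVD.eu x1‖ := by
            have h := RSVD.norm_mulVec_le F x1
            linarith
    have hxsplit : ‖RSVD.eu x‖ ^ 2 = ‖RSVD.eu x1‖ ^ 2 + ‖RSVD.eu x2‖ ^ 2 := by
      have h := RSVD.norm_split x
      rw [← hx1def, ← hx2def] at h
      exact h
    have hCS : ‖RSVD.eu x2‖ + ‖F‖ * ‖RSVD.eu x1‖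
        ≤ Real.sqrt (1 + ‖F‖ ^ 2) * ‖RSVD.eu x‖ :=
      RSVD.cs_bound _ _ _ _ (norm_nonneg _) (norm_nonneg _) (norm_nonneg _) (norm_nonneg _)
        hxsplit
    calc ‖RSVD.eu ((Pr * Uh) *ᵥ (E *ᵥ v))‖ ≤ ‖RSVD.eu (E *ᵥ v)‖ := hstep1
      _ ≤ sig k ^ s * ‖RSVD.eu (fun j : Fin n' => v (Fin.natAdd k j))‖ := hstep2
      _ = sig k ^ s * ‖RSVD.eu (x2 - F *ᵥ x1)‖ := by rw [hveq]
      _ ≤ sig k ^ s * (‖RSVD.eu x2‖ + ‖F‖ * ‖RSVD.eu x1‖) :=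
          mul_le_mul_of_nonneg_left hstep3 (pow_nonneg (hsig0 k) s)
      _ ≤ sig k ^ s * (Real.sqrt (1 + ‖F‖ ^ 2) * ‖RSVD.eu x‖) :=
          mul_le_mul_of_nonneg_left hCS (pow_nonneg (hsig0 k) s)
      _ = t * ‖RSVD.eu x‖ := by rw [htdef]; ring
  -- power chain
  have htMq : (M ^ q)ᵀ = M ^ q := by
    rw [Matrix.transpose_pow, RSVD.transpose_eq_of_herm hMpsd.1]
  have hpows : M ^ q * (M * M ^ q) = M ^ s := by
    rw [← pow_succ', ← pow_add]
    congr 1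
    rw [hs_def]
    omega
  have h1 : ‖Pr * M * Pr‖ = ‖Pr * B‖ * ‖Pr * B‖ := by
    rw [← RSVD.norm_self_mul_transpose (Pr * B)]
    congr 1
    rw [Matrix.transpose_mul, hPrt, hMdef]
    simp only [Matrix.mul_assoc]
  have h2 : ‖Pr * M * Pr‖ ^ s ≤ ‖Pr * M ^ s * Pr‖ :=
    RSVD.key_pow hk0 hPrt hPrPr hMpsd s (by omega)
  have h3 : ‖Pr * M ^ s * Pr‖ = ‖Pr * C‖ * ‖Pr * C‖ := by
    rw [← RSVD.norm_self_mul_transpose (Pr * C)]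
    congr 1
    rw [hCdef, Matrix.transpose_mul, Matrix.transpose_mul, hPrt, htMq]
    symm
    have hmid : B * (Bᵀ * (M ^ q * Pr)) = M * (M ^ q * Pr) := by
      rw [← Matrix.mul_assoc B Bᵀ, ← hMdef]
    have hpows' : M ^ q * (M * (M ^ q * Pr)) = M ^ s * Pr := by
      rw [show M ^ q * (M * (M ^ q * Pr)) = (M ^ q * (M * M ^ q)) * Pr from by
        simp only [Matrix.mul_assoc], hpows]
    calc Pr * (M ^ q * B) * (Bᵀ * M ^ q * Pr)
        = Pr * (M ^ q * (B * (Bᵀ * (M ^ q * Pr)))) := by simp only [Matrix.mul_assoc]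
      _ = Pr * (M ^ q * (M * (M ^ q * Pr))) := by rw [hmid]
      _ = Pr * (M ^ s * Pr) := by rw [hpows']
      _ = Pr * M ^ s * Pr := by rw [Matrix.mul_assoc]
  -- final arithmetic
  simp only [RSVD.spec_eq_norm]
  rw [hLHS]
  have ha0 : (0:ℝ) ≤ ‖Pr * B‖ := norm_nonneg _
  have hg1 : (0:ℝ) ≤ 1 + ‖F‖ ^ 2 := by positivity
  have hkey : ‖Pr * B‖ ^ (2 * s) ≤ sig k ^ (2 * s) * (1 + ‖F‖ ^ 2) := by
    have habs : ‖Pr * B‖ ^ (2 * s) = (‖Pr * B‖ * ‖Pr * B‖) ^ s := by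
      rw [← pow_two, ← pow_mul]
    have hchain : (‖Pr * B‖ * ‖Pr * B‖) ^ s ≤ ‖Pr * C‖ * ‖Pr * C‖ := by
      rw [← h1, ← h3]
      exact h2
    have hPrC2 : ‖Pr * C‖ * ‖Pr * C‖ ≤ t * t :=
      mul_le_mul hPrC hPrC (norm_nonneg _) ht0
    have htt : t * t = sig k ^ (2 * s) * (1 + ‖F‖ ^ 2) := by
      rw [htdef]
      have hss : Real.sqrt (1 + ‖F‖ ^ 2) * Real.sqrt (1 + ‖F‖ ^ 2) = 1 + ‖F‖ ^ 2 :=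
        Real.mul_self_sqrt hg1
      calc sig k ^ s * Real.sqrt (1 + ‖F‖ ^ 2) * (sig k ^ s * Real.sqrt (1 + ‖F‖ ^ 2))
          = sig k ^ s * sig k ^ s
            * (Real.sqrt (1 + ‖F‖ ^ 2) * Real.sqrt (1 + ‖F‖ ^ 2)) := by ring
        _ = sig k ^ (2 * s) * (1 + ‖F‖ ^ 2) := by
            rw [hss, ← pow_add]
            congr 2
            omega
    rw [habs]
    calc (‖Pr * B‖ * ‖Pr * B‖) ^ s ≤ ‖Pr * C‖ * ‖Pr * C‖ := hchain
      _ ≤ t * t := hPrC2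
      _ = _ := htt
  have hne : (4 * (q:ℝ) + 2) ≠ 0 := by positivity
  have hexp : ((2 * s : ℕ) : ℝ) * ((1:ℝ) / (4 * (q:ℝ) + 2)) = 1 := by
    rw [hs_def]
    push_cast
    rw [mul_one_div, show (2:ℝ) * (2 * (q:ℝ) + 1) = 4 * (q:ℝ) + 2 from by ring]
    exact div_self hne
  have hepos : (0:ℝ) ≤ (1:ℝ) / (4 * (q:ℝ) + 2) := by positivity
  have hmono := Real.rpow_le_rpow (by positivity) hkey hepos
  have hL : ((‖Pr * B‖ ^ (2 * s) : ℝ)) ^ ((1:ℝ) / (4 * (q:ℝ) + 2)) = ‖Pr * B‖ := by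
    rw [← Real.rpow_natCast (‖Pr * B‖) (2 * s), ← Real.rpow_mul ha0, hexp, Real.rpow_one]
  have hR : ((sig k ^ (2 * s) * (1 + ‖F‖ ^ 2) : ℝ)) ^ ((1:ℝ) / (4 * (q:ℝ) + 2))
      = sig k * (1 + ‖F‖ ^ 2) ^ ((1:ℝ) / (4 * (q:ℝ) + 2)) := by
    rw [Real.mul_rpow (pow_nonneg (hsig0 k) _) hg1]
    congr 1
    rw [← Real.rpow_natCast (sig k) (2 * s), ← Real.rpow_mul (hsig0 k), hexp, Real.rpow_one]
  rw [hL, hR] at hmono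
  calc ‖Pr * B‖ ≤ sig k * (1 + ‖F‖ ^ 2) ^ ((1:ℝ) / (4 * (q:ℝ) + 2)) := hmono
    _ = (1 + ‖F‖ ^ 2) ^ ((1:ℝ) / (4 * (q:ℝ) + 2)) * sig k := mul_comm _ _
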